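/- If G is a finite simple connected graph that is edge critical, i.e., α_0(G \ e) < α_0(G) for every edge e of G (where G \ e denotes the graph obtained by deleting the edge e but keeping all vertices), then G is irreducible. -/
import Mathlib


/-- The vertex covering number `α₀` of the induced subgraph of `G` on the set of
vertices `S`: the least cardinality of a set `C ⊆ S` covering every edge of `G`
with both endpoints in `S`. -/
noncomputable def alpha0On {n : ℕ} (G : SimpleGraph (Fin n)) (S : Finset (Fin n)) : ℕ :=
  sInf {k : ℕ | ∃ C : Finset (Fin n), C ⊆ S ∧
    (∀ i ∈ S, ∀ j ∈ S, G.Adj i j → i ∈ C ∨ j ∈ C) ∧ C.card = k}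

/-- The induced subgraph of `G` on the vertex set `S` is irreducible if `S`
cannot be partitioned into two nonempty sets `S1`, `S2` with
`α₀(G[S]) = α₀(G[S1]) + α₀(G[S2])`. -/
def IrreducibleOn {n : ℕ} (G : SimpleGraph (Fin n)) (S : Finset (Fin n)) : Prop :=
  ¬ ∃ S1 S2 : Finset (Fin n), S1.Nonempty ∧ S2.Nonempty ∧
      Disjoint S1 S2 ∧ S1 ∪ S2 = S ∧
      alpha0On G S = alpha0On G S1 + alpha0On G S2

lemma alpha0On_nonempty {n : ℕ} (G : SimpleGraph (Fin n)) (S : Finset (Fin n)) :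
    {k : ℕ | ∃ C : Finset (Fin n), C ⊆ S ∧
      (∀ i ∈ S, ∀ j ∈ S, G.Adj i j → i ∈ C ∨ j ∈ C) ∧ C.card = k}.Nonempty :=
  ⟨S.card, S, le_refl S, fun i hi _ _ _ => Or.inl hi, rfl⟩

lemma alpha0On_le {n : ℕ} {G : SimpleGraph (Fin n)} {S C : Finset (Fin n)}
    (hCS : C ⊆ S) (hcov : ∀ i ∈ S, ∀ j ∈ S, G.Adj i j → i ∈ C ∨ j ∈ C) :
    alpha0On G S ≤ C.card :=
  Nat.sInf_le ⟨C, hCS, hcov, rfl⟩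

lemma alpha0On_spec {n : ℕ} (G : SimpleGraph (Fin n)) (S : Finset (Fin n)) :
    ∃ C : Finset (Fin n), C ⊆ S ∧
      (∀ i ∈ S, ∀ j ∈ S, G.Adj i j → i ∈ C ∨ j ∈ C) ∧ C.card = alpha0On G S :=
  Nat.sInf_mem (alpha0On_nonempty G S)

lemma cross_edge {n : ℕ} (G : SimpleGraph (Fin n)) (S1 S2 : Finset (Fin n))
    (hdisj : Disjoint S1 S2) (hunion : S1 ∪ S2 = Finset.univ) :
    ∀ {a b : Fin n}, G.Walk a b → a ∈ S1 → b ∈ S2 →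
      ∃ i ∈ S1, ∃ j ∈ S2, G.Adj i j := by
  intro a b w
  induction w with
  | nil => exact fun ha hb => (Finset.disjoint_left.mp hdisj ha hb).elim
  | @cons u v c h p ih =>
    intro ha hb
    by_cases hv : v ∈ S2
    · exact ⟨u, ha, v, hv, h⟩
    · have hv1 : v ∈ S1 := by
        have : v ∈ S1 ∪ S2 := hunion ▸ Finset.mem_univ v
        rcases Finset.mem_union.mp this with h1 | h2
        · exact h1
        · exact absurd h2 hv
      exact ih hv1 hb

theorem edge_critical_implies_irreducible {n : ℕ}
    (G : SimpleGraph (Fin n)) (hconn : G.Connected)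
    (hec : ∀ i j : Fin n, G.Adj i j →
      alpha0On (G.deleteEdges {s(i, j)}) Finset.univ < alpha0On G Finset.univ) :
    IrreducibleOn G Finset.univ := by
  rintro ⟨S1, S2, hS1, hS2, hdisj, hunion, heq⟩
  obtain ⟨a, ha⟩ := hS1
  obtain ⟨b, hb⟩ := hS2
  obtain ⟨w⟩ := hconn.preconnected a b
  obtain ⟨i, hi, j, hj, hij⟩ := cross_edge G S1 S2 hdisj hunion w ha hb
  have hlt := hec i j hij
  obtain ⟨C, hCS, hcov, hcard⟩ := alpha0On_spec (G.deleteEdges {s(i, j)}) Finset.univ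
  -- C does not contain i nor j
  have hiC : i ∉ C ∧ j ∉ C := by
    by_contra hcon
    have hcov' : ∀ u ∈ (Finset.univ : Finset (Fin n)), ∀ v ∈ (Finset.univ : Finset (Fin n)),
        G.Adj u v → u ∈ C ∨ v ∈ C := by
      intro u _ v _ huv
      by_cases he : s(u, v) = s(i, j)
      · rcases Sym2.eq_iff.mp he with ⟨rfl, rfl⟩ | ⟨rfl, rfl⟩
        · rcases not_and_or.mp hcon with h | h
          · exact Or.inl (not_not.mp h)
          · exact Or.inr (not_not.mp h)
        · rcases not_and_or.mp hcon with h | h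
          · exact Or.inr (not_not.mp h)
          · exact Or.inl (not_not.mp h)
      · exact hcov u (Finset.mem_univ u) v (Finset.mem_univ v)
          ((SimpleGraph.deleteEdges_adj).mpr ⟨huv, by simpa using he⟩)
    have := alpha0On_le (G := G) hCS hcov'
    omega
  -- C ∩ S1 covers G on S1, C ∩ S2 covers G on S2
  have hcov1 : ∀ u ∈ S1, ∀ v ∈ S1, G.Adj u v → u ∈ C ∩ S1 ∨ v ∈ C ∩ S1 := by
    intro u hu v hv huv
    have he : s(u, v) ≠ s(i, j) := by
      intro h
      rcases Sym2.eq_iff.mp h with ⟨rfl, rfl⟩ | ⟨rfl, rfl⟩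
      · exact Finset.disjoint_left.mp hdisj hv hj
      · exact Finset.disjoint_left.mp hdisj hu hj
    rcases hcov u (Finset.mem_univ u) v (Finset.mem_univ v)
        ((SimpleGraph.deleteEdges_adj).mpr ⟨huv, by simpa using he⟩) with h | h
    · exact Or.inl (Finset.mem_inter.mpr ⟨h, hu⟩)
    · exact Or.inr (Finset.mem_inter.mpr ⟨h, hv⟩)
  have hcov2 : ∀ u ∈ S2, ∀ v ∈ S2, G.Adj u v → u ∈ C ∩ S2 ∨ v ∈ C ∩ S2 := by
    intro u hu v hv huv
    have he : s(u, v) ≠ s(i, j) := by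
      intro h
      rcases Sym2.eq_iff.mp h with ⟨rfl, rfl⟩ | ⟨rfl, rfl⟩
      · exact Finset.disjoint_left.mp hdisj hi hu
      · exact Finset.disjoint_left.mp hdisj hi hv
    rcases hcov u (Finset.mem_univ u) v (Finset.mem_univ v)
        ((SimpleGraph.deleteEdges_adj).mpr ⟨huv, by simpa using he⟩) with h | h
    · exact Or.inl (Finset.mem_inter.mpr ⟨h, hu⟩)
    · exact Or.inr (Finset.mem_inter.mpr ⟨h, hv⟩)
  have h1 := alpha0On_le (G := G) (Finset.inter_subset_right) hcov1
  have h2 := alpha0On_le (G := G) (Finset.inter_subset_right) hcov2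
  have hsum : (C ∩ S1).card + (C ∩ S2).card = C.card := by
    rw [← Finset.card_union_of_disjoint
      (Finset.disjoint_of_subset_left Finset.inter_subset_right
        (Finset.disjoint_of_subset_right Finset.inter_subset_right hdisj)),
      ← Finset.inter_union_distrib_left, hunion, Finset.inter_univ]
  omega
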